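/- (Theorem 4, Profit-maximizing Recurring Auction: first-order conditions.) Suppose v* = (v_1*, …, v_T*) with vhi > v_1* > … > v_T* > vlo is a local maximizer of R among threshold vectors, and f(v_t*) > 0 and F(v_t*) > 0 for every 1 ≤ t ≤ T. Then, with v_0* = vhi, for every 1 ≤ t < T: ( (F(v_{t−1}*)/F(v_t*))^(N−1) − δ·( N·F(v_t*) − (N−1)·F(v_{t+1}*) )/F(v_t*) )·K − (1 − δ)·( v_t* − (1 − F(v_t*))/f(v_t*) − v_s ) = 0, and for t = T: (F(v_{T−1}*)/F(v_T*))^(N−1)·K − ( v_T* − (1 − F(v_T*))/f(v_T*) − v_s ) = 0. -/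

import Mathlib

open Set Filter Topology Function intervalIntegral

/-!
At an interior local maximiser, moving the single threshold `v t` inside `(v (t+1), v (t-1))`
(inside `(vlo, v (T-1))` when `t = T`) keeps the vector feasible, so the partial derivative of
`R` in `v t` vanishes. Only the `t`-th and `(t+1)`-st period payoffs (for `t = T`, the `T`-th
payoff and the terminal term) depend on `v t`, and the fundamental theorem of calculus makes
their derivatives explicit. Their combination is `δ^(t-1) · N f(v_t) F(v_t)^(N-1)` times the
left-hand side of the claimed condition.
-/

/-- T-period expected seller revenue at thresholds `u : ℕ → ℝ` (with `u 0 = vhi`):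
`R(u) = δ^T·N·(1 − F(u_T))·G(u_T)·u_T + Σ_{t=1}^T δ^(t−1)·( N·∫_{u_t}^{u_{t−1}}
x·(1 − F(x))·(N−1)·F(x)^(N−2)·f(x) dx + N·(1−δ)·(1 − F(u_t))·G(u_t)·u_t
− N·G(u_{t−1})·(F(u_{t−1}) − F(u_t))·K − v_s·(F(u_{t−1})^N − F(u_t)^N) )`,
where `G = F^(N−1)`. -/
noncomputable def Rev (N T : ℕ) (K vs δ : ℝ) (F f : ℝ → ℝ) (u : ℕ → ℝ) : ℝ :=
  δ ^ T * (N : ℝ) * (1 - F (u T)) * F (u T) ^ (N - 1) * u T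
    + ∑ t ∈ Finset.Icc 1 T, δ ^ (t - 1) *
        ((N : ℝ) * (∫ x in (u t)..(u (t - 1)),
            x * (1 - F x) * ((N : ℝ) - 1) * F x ^ (N - 2) * f x)
          + (N : ℝ) * (1 - δ) * (1 - F (u t)) * F (u t) ^ (N - 1) * u t
          - (N : ℝ) * F (u (t - 1)) ^ (N - 1) * (F (u (t - 1)) - F (u t)) * K
          - vs * (F (u (t - 1)) ^ N - F (u t) ^ N))

def thresholdSet (T : ℕ) (vlo vhi : ℝ) : Set (ℕ → ℝ) :=
  {u | u 0 = vhi ∧ (∀ t, 1 ≤ t → t ≤ T → u t ≤ u (t - 1)) ∧ vlo ≤ u T}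

noncomputable section

variable (N : ℕ) (K vs δ : ℝ) (F f : ℝ → ℝ)

def revenueDensity (x : ℝ) : ℝ :=
  x * (1 - F x) * ((N : ℝ) - 1) * F x ^ (N - 2) * f x

def periodRev (a b : ℝ) : ℝ :=
  (N : ℝ) * (∫ x in b..a, revenueDensity N F f x)
    + (N : ℝ) * (1 - δ) * (1 - F b) * F b ^ (N - 1) * b
    - (N : ℝ) * F a ^ (N - 1) * (F a - F b) * K
    - vs * (F a ^ N - F b ^ N)

def saleRevDeriv (w : ℝ) : ℝ :=
  (1 - F w) * F w ^ (N - 1)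
    + w * f w * (((N - 1 : ℕ) : ℝ) * F w ^ (N - 2) * (1 - F w) - F w ^ (N - 1))

def periodRevDerivSnd (a w : ℝ) : ℝ :=
  N * ((1 - δ) * saleRevDeriv N F f w - revenueDensity N F f w
    + F a ^ (N - 1) * f w * K + vs * F w ^ (N - 1) * f w)

def periodRevDerivFst (w b : ℝ) : ℝ :=
  N * (revenueDensity N F f w
    - (((N - 1 : ℕ) : ℝ) * F w ^ (N - 2) * (F w - F b) + F w ^ (N - 1)) * f w * K
    - vs * F w ^ (N - 1) * f w)

end

theorem Rev_eq_add_sum_periodRev (N T : ℕ) (K vs δ : ℝ) (F f : ℝ → ℝ) (u : ℕ → ℝ) :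
    Rev N T K vs δ F f u = δ ^ T * N * (1 - F (u T)) * F (u T) ^ (N - 1) * u T
      + ∑ t ∈ Finset.Icc 1 T, δ ^ (t - 1) * periodRev N K vs δ F f (u (t - 1)) (u t) :=
  rfl

theorem IsLocalMaxOn.isLocalMax_update {ι α β : Type*} [DecidableEq ι] [TopologicalSpace α]
    [Preorder β] {g : (ι → α) → β} {S : Set (ι → α)} {v : ι → α} (h : IsLocalMaxOn g S v)
    {i : ι} (hS : ∀ᶠ x in 𝓝 (v i), update v i x ∈ S) :
    IsLocalMax (fun x => g (update v i x)) (v i) := by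
  have hv : update v i (v i) = v := update_eq_self i v
  have htends : Tendsto (update v i) (𝓝 (v i)) (𝓝[S] v) := by
    refine tendsto_nhdsWithin_iff.2 ⟨?_, hS⟩
    have hcont : Continuous (update v i) := continuous_const.update i continuous_id
    simpa only [hv] using hcont.tendsto (v i)
  exact IsMaxFilter.comp_tendsto (hv.symm ▸ h) htends

theorem eventually_update_mem_thresholdSet {T t : ℕ} {vlo vhi : ℝ} {v : ℕ → ℝ} (ht : t ≠ 0)
    (hv0 : v 0 = vhi) (hanti : StrictAntiOn v (Icc 0 T)) (hvT : vlo < v T) :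
    ∀ᶠ x in 𝓝 (v t), update v t x ∈ thresholdSet T vlo vhi := by
  have hdec : ∀ s ∈ Finset.Icc 1 T, v s < v (s - 1) := fun s hs => by
    obtain ⟨h1, h2⟩ := Finset.mem_Icc.1 hs
    exact hanti ⟨Nat.zero_le _, by omega⟩ ⟨Nat.zero_le s, h2⟩ (by omega)
  let U := (⋂ s ∈ Finset.Icc 1 T, {u : ℕ → ℝ | u s < u (s - 1)}) ∩ {u | vlo < u T}
  have hU : IsOpen U := by
    refine (isOpen_biInter_finset fun s _ => ?_).inter ?_
    · exact isOpen_lt (continuous_apply s) (continuous_apply (s - 1))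
    · exact isOpen_lt continuous_const (continuous_apply T)
  have hcont : Continuous (update v t) := continuous_const.update t continuous_id
  have hnhds : update v t ⁻¹' U ∈ 𝓝 (v t) := by
    refine hcont.continuousAt.preimage_mem_nhds ?_
    rw [update_eq_self]
    exact hU.mem_nhds ⟨mem_iInter₂.2 hdec, hvT⟩
  filter_upwards [hnhds] with x ⟨hx, hxT⟩
  simp only [mem_iInter] at hx
  exact ⟨by rw [update_of_ne (Ne.symm ht), hv0],
    fun s h1 h2 => (hx s (Finset.mem_Icc.2 ⟨h1, h2⟩)).le, hxT.le⟩

theorem hasDerivAt_sum_Icc_update {φ : ℝ → ℝ → ℝ} {c v : ℕ → ℝ} {T t : ℕ} {d₁ d₂ : ℝ}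
    (ht : 1 ≤ t) (htT : t ≤ T) (h₂ : HasDerivAt (φ (v (t - 1))) d₂ (v t))
    (h₁ : t < T → HasDerivAt (fun a => φ a (v (t + 1))) d₁ (v t)) :
    HasDerivAt (fun x => ∑ s ∈ Finset.Icc 1 T, c s * φ (update v t x (s - 1)) (update v t x s))
      (c t * d₂ + if t < T then c (t + 1) * d₁ else 0) (v t) := by
  have hterm : ∀ s ∈ Finset.Icc 1 T,
      HasDerivAt (fun x => c s * φ (update v t x (s - 1)) (update v t x s))
        ((if s = t then c t * d₂ else 0) + if s = t + 1 then c (t + 1) * d₁ else 0) (v t) := by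
    intro s hs
    rw [Finset.mem_Icc] at hs
    by_cases hst : s = t
    · subst hst
      simp only [update_self, update_of_ne (show s - 1 ≠ s by omega), if_pos,
        if_neg (show s ≠ s + 1 by omega), add_zero]
      exact h₂.const_mul (c s)
    by_cases hst1 : s = t + 1
    · subst hst1
      simp only [update_self, update_of_ne hst, Nat.add_sub_cancel, if_neg hst, zero_add]
      exact (h₁ (by omega)).const_mul (c (t + 1))
    · simp only [update_of_ne hst, update_of_ne (show s - 1 ≠ t by omega), if_neg hst,
        if_neg hst1, add_zero]
      exact hasDerivAt_const _ _
  refine (HasDerivAt.fun_sum hterm).congr_deriv ?_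
  simp only [Finset.sum_add_distrib, Finset.sum_ite_eq', Finset.mem_Icc, ht, htT, and_self,
    if_true, le_add_iff_nonneg_left, zero_le, true_and, Nat.add_one_le_iff]

theorem ContinuousOn.hasDerivAt_integral_left {g : ℝ → ℝ} {s : Set ℝ} {a w : ℝ}
    (hg : ContinuousOn g s) (hs : s ∈ 𝓝 w) (hsub : uIcc w a ⊆ s) :
    HasDerivAt (fun x => ∫ y in x..a, g y) (-g w) w :=
  integral_hasDerivAt_left (hg.mono hsub).intervalIntegrable
    ((hg.mono interior_subset).stronglyMeasurableAtFilter isOpen_interior w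
      (mem_interior_iff_mem_nhds.2 hs))
    (hg.continuousAt hs)

theorem ContinuousOn.hasDerivAt_integral_right {g : ℝ → ℝ} {s : Set ℝ} {b w : ℝ}
    (hg : ContinuousOn g s) (hs : s ∈ 𝓝 w) (hsub : uIcc b w ⊆ s) :
    HasDerivAt (fun x => ∫ y in b..x, g y) (g w) w :=
  integral_hasDerivAt_right (hg.mono hsub).intervalIntegrable
    ((hg.mono interior_subset).stronglyMeasurableAtFilter isOpen_interior w
      (mem_interior_iff_mem_nhds.2 hs))
    (hg.continuousAt hs)

section Derivatives

variable {N : ℕ} {K vs δ : ℝ} {F f : ℝ → ℝ}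

theorem continuousOn_revenueDensity {s : Set ℝ} (hF : ContinuousOn F s) (hf : ContinuousOn f s) :
    ContinuousOn (revenueDensity N F f) s := by
  unfold revenueDensity
  fun_prop

theorem hasDerivAt_saleRev {w : ℝ} (hF : HasDerivAt F (f w) w) :
    HasDerivAt (fun x => (1 - F x) * F x ^ (N - 1) * x) (saleRevDeriv N F f w) w := by
  refine (((hF.const_sub 1).fun_mul (hF.fun_pow (N - 1))).fun_mul
    (hasDerivAt_id' w)).congr_deriv ?_
  simp only [saleRevDeriv, Nat.sub_sub]
  ring

theorem hasDerivAt_periodRev_snd {s : Set ℝ} {a w : ℝ} (hF : ∀ x ∈ s, HasDerivAt F (f x) x)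
    (hf : ContinuousOn f s) (hs : s ∈ 𝓝 w) (hsub : uIcc w a ⊆ s) :
    HasDerivAt (periodRev N K vs δ F f a) (periodRevDerivSnd N K vs δ F f a w) w := by
  have hFw := hF w (mem_of_mem_nhds hs)
  have hI := (continuousOn_revenueDensity (N := N) (HasDerivAt.continuousOn hF) hf
    ).hasDerivAt_integral_left hs hsub
  have H := (((hI.const_mul (N : ℝ)).fun_add
      ((hasDerivAt_saleRev (N := N) hFw).const_mul ((N : ℝ) * (1 - δ)))).fun_sub
    (((hFw.const_sub (F a)).const_mul ((N : ℝ) * F a ^ (N - 1))).mul_const K)).fun_sub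
    (((hFw.fun_pow N).const_sub (F a ^ N)).const_mul vs)
  refine (H.congr_of_eventuallyEq (.of_forall fun x => ?_)).congr_deriv ?_
  · simp only [periodRev]
    ring
  · simp only [periodRevDerivSnd]
    ring

theorem hasDerivAt_periodRev_fst {s : Set ℝ} {b w : ℝ} (hF : ∀ x ∈ s, HasDerivAt F (f x) x)
    (hf : ContinuousOn f s) (hs : s ∈ 𝓝 w) (hsub : uIcc b w ⊆ s) :
    HasDerivAt (fun a => periodRev N K vs δ F f a b) (periodRevDerivFst N K vs F f w b) w := by
  have hFw := hF w (mem_of_mem_nhds hs)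
  have hI := (continuousOn_revenueDensity (N := N) (HasDerivAt.continuousOn hF) hf
    ).hasDerivAt_integral_right hs hsub
  have H := (((hI.const_mul (N : ℝ)).add_const
      ((N : ℝ) * (1 - δ) * (1 - F b) * F b ^ (N - 1) * b)).fun_sub
    ((((hFw.fun_pow (N - 1)).fun_mul (hFw.sub_const (F b))).const_mul (N : ℝ)).mul_const K)).fun_sub
    (((hFw.fun_pow N).sub_const (F b ^ N)).const_mul vs)
  refine (H.congr_of_eventuallyEq (.of_forall fun x => ?_)).congr_deriv ?_
  · simp only [periodRev]
    ring
  · simp only [periodRevDerivFst, Nat.sub_sub]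
    ring

end Derivatives

section FirstOrderConditions

variable {N : ℕ} {K vs δ : ℝ} {F f : ℝ → ℝ}

theorem periodRevDerivSnd_add_mul_periodRevDerivFst (hN : 2 ≤ N) {a w b : ℝ} (hF : F w ≠ 0)
    (hf : f w ≠ 0) :
    periodRevDerivSnd N K vs δ F f a w + δ * periodRevDerivFst N K vs F f w b
      = N * f w * F w ^ (N - 1) *
        (((F a / F w) ^ (N - 1)
            - δ * ((N : ℝ) * F w - ((N : ℝ) - 1) * F b) / F w) * K
          - (1 - δ) * (w - (1 - F w) / f w - vs)) := by
  obtain ⟨m, rfl⟩ : ∃ m, N = m + 2 := ⟨N - 2, by omega⟩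
  simp only [periodRevDerivSnd, periodRevDerivFst, saleRevDeriv, revenueDensity,
    Nat.add_sub_cancel, show m + 2 - 1 = m + 1 from rfl, div_pow]
  field_simp
  push_cast
  ring

theorem periodRevDerivSnd_add_mul_saleRevDeriv (hN : 2 ≤ N) {a w : ℝ} (hF : F w ≠ 0)
    (hf : f w ≠ 0) :
    periodRevDerivSnd N K vs δ F f a w + δ * (N * saleRevDeriv N F f w)
      = N * f w * F w ^ (N - 1) *
        ((F a / F w) ^ (N - 1) * K - (w - (1 - F w) / f w - vs)) := by
  obtain ⟨m, rfl⟩ : ∃ m, N = m + 2 := ⟨N - 2, by omega⟩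
  simp only [periodRevDerivSnd, saleRevDeriv, revenueDensity,
    Nat.add_sub_cancel, show m + 2 - 1 = m + 1 from rfl, div_pow]
  field_simp
  push_cast
  ring

variable {T t : ℕ} {v : ℕ → ℝ} {s : Set ℝ}

theorem hasDerivAt_Rev_update_of_lt (hF : ∀ x ∈ s, HasDerivAt F (f x) x) (hf : ContinuousOn f s)
    (ht : 1 ≤ t) (htT : t < T) (hs : s ∈ 𝓝 (v t)) (hprev : uIcc (v t) (v (t - 1)) ⊆ s)
    (hnext : uIcc (v (t + 1)) (v t) ⊆ s) :
    HasDerivAt (fun x => Rev N T K vs δ F f (update v t x))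
      (δ ^ (t - 1) * (periodRevDerivSnd N K vs δ F f (v (t - 1)) (v t)
        + δ * periodRevDerivFst N K vs F f (v t) (v (t + 1)))) (v t) := by
  simp only [Rev_eq_add_sum_periodRev, update_of_ne (show T ≠ t by omega)]
  refine ((hasDerivAt_const _ _).fun_add (hasDerivAt_sum_Icc_update (c := fun s => δ ^ (s - 1))
    ht htT.le (hasDerivAt_periodRev_snd hF hf hs hprev)
    fun _ => hasDerivAt_periodRev_fst hF hf hs hnext)).congr_deriv ?_
  obtain ⟨r, rfl⟩ : ∃ r, t = r + 1 := ⟨t - 1, by omega⟩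
  simp only [if_pos htT, Nat.add_sub_cancel]
  ring

theorem hasDerivAt_Rev_update_last (hF : ∀ x ∈ s, HasDerivAt F (f x) x) (hf : ContinuousOn f s)
    (hT : 1 ≤ T) (hs : s ∈ 𝓝 (v T)) (hprev : uIcc (v T) (v (T - 1)) ⊆ s) :
    HasDerivAt (fun x => Rev N T K vs δ F f (update v T x))
      (δ ^ (T - 1) * (periodRevDerivSnd N K vs δ F f (v (T - 1)) (v T)
        + δ * (N * saleRevDeriv N F f (v T)))) (v T) := by
  have hterm : HasDerivAt (fun x => δ ^ T * N * (1 - F x) * F x ^ (N - 1) * x)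
      (δ ^ T * N * saleRevDeriv N F f (v T)) (v T) := by
    simpa only [mul_assoc] using
      (hasDerivAt_saleRev (hF _ (mem_of_mem_nhds hs))).const_mul (δ ^ T * N)
  simp only [Rev_eq_add_sum_periodRev, update_self]
  refine (hterm.fun_add (hasDerivAt_sum_Icc_update (c := fun s => δ ^ (s - 1)) (d₁ := 0)
    hT le_rfl (hasDerivAt_periodRev_snd hF hf hs hprev)
    fun h => absurd h (lt_irrefl T))).congr_deriv ?_
  obtain ⟨r, rfl⟩ : ∃ r, T = r + 1 := ⟨T - 1, by omega⟩
  simp only [lt_irrefl, if_false, Nat.add_sub_cancel]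
  ring

end FirstOrderConditions

theorem profit_maximizing_recurring_auction_FOC_general
    (vlo vhi : ℝ)
    (N T : ℕ) (hN : 2 ≤ N) (hT : 1 ≤ T)
    (K : ℝ)
    (vs : ℝ)
    (δ : ℝ) (hδ0 : 0 < δ)
    (F f : ℝ → ℝ)
    (hFderiv : ∀ x ∈ Set.Icc vlo vhi, HasDerivAt F (f x) x)
    (hfcont : ContinuousOn f (Set.Icc vlo vhi))
    (v : ℕ → ℝ)
    (hv0 : v 0 = vhi)
    (hv1 : v 1 < vhi)
    (hvdec : ∀ t, 1 ≤ t → t < T → v (t + 1) < v t)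
    (hvT : vlo < v T)
    (hfpos : ∀ t, 1 ≤ t → t ≤ T → 0 < f (v t))
    (hFpos : ∀ t, 1 ≤ t → t ≤ T → 0 < F (v t))
    (hmax : IsLocalMaxOn (Rev N T K vs δ F f)
      {u : ℕ → ℝ | u 0 = vhi ∧ (∀ t, 1 ≤ t → t ≤ T → u t ≤ u (t - 1)) ∧ vlo ≤ u T} v) :
    (∀ t, 1 ≤ t → t < T →
      ((F (v (t - 1)) / F (v t)) ^ (N - 1)
          - δ * ((N : ℝ) * F (v t) - ((N : ℝ) - 1) * F (v (t + 1))) / F (v t)) * K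
        - (1 - δ) * (v t - (1 - F (v t)) / f (v t) - vs) = 0) ∧
    (F (v (T - 1)) / F (v T)) ^ (N - 1) * K - (v T - (1 - F (v T)) / f (v T) - vs) = 0 := by
  have hanti : StrictAntiOn v (Icc 0 T) := strictAntiOn_of_add_one_lt ordConnected_Icc
    fun s _ _ hs1 => by
      rcases Nat.eq_zero_or_pos s with rfl | hs
      · exact hv0 ▸ hv1
      · exact hvdec s hs (by simpa using hs1.2)
  have hanti' : ∀ {a b}, a ≤ b → b ≤ T → v b ≤ v a := fun hab hb =>
    hanti.antitoneOn ⟨Nat.zero_le _, hab.trans hb⟩ ⟨Nat.zero_le _, hb⟩ hab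
  have hIcc : ∀ t ≤ T, v t ∈ Icc vlo vhi := fun t ht =>
    ⟨hvT.le.trans (hanti' ht le_rfl), hv0 ▸ hanti' (Nat.zero_le t) ht⟩
  have hnhds : ∀ t, 1 ≤ t → t ≤ T → Icc vlo vhi ∈ 𝓝 (v t) := fun t ht htT =>
    Icc_mem_nhds (hvT.trans_le (hanti' htT le_rfl))
      (hv0 ▸ hanti ⟨le_rfl, Nat.zero_le T⟩ ⟨Nat.zero_le t, htT⟩ ht)
  have hlocmax : ∀ t, 1 ≤ t → IsLocalMax (fun x => Rev N T K vs δ F f (update v t x)) (v t) :=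
    fun t ht => hmax.isLocalMax_update (eventually_update_mem_thresholdSet (by omega) hv0 hanti hvT)
  have hN0 : N ≠ 0 := by omega
  refine ⟨fun t ht htT => ?_, ?_⟩
  · have h := (hlocmax t ht).hasDerivAt_eq_zero (hasDerivAt_Rev_update_of_lt hFderiv hfcont ht htT
      (hnhds t ht htT.le) (uIcc_subset_Icc (hIcc t htT.le) (hIcc (t - 1) (by omega)))
      (uIcc_subset_Icc (hIcc (t + 1) htT) (hIcc t htT.le)))
    rw [periodRevDerivSnd_add_mul_periodRevDerivFst hN (hFpos t ht htT.le).ne'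
      (hfpos t ht htT.le).ne'] at h
    simpa [hδ0.ne', hN0, (hfpos t ht htT.le).ne', (hFpos t ht htT.le).ne'] using h
  · have h := (hlocmax T hT).hasDerivAt_eq_zero (hasDerivAt_Rev_update_last hFderiv hfcont hT
      (hnhds T hT le_rfl) (uIcc_subset_Icc (hIcc T le_rfl) (hIcc (T - 1) (by omega))))
    rw [periodRevDerivSnd_add_mul_saleRevDeriv hN (hFpos T hT le_rfl).ne'
      (hfpos T hT le_rfl).ne'] at h
    simpa [hδ0.ne', hN0, (hfpos T hT le_rfl).ne', (hFpos T hT le_rfl).ne'] using h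

/-- Theorem 4 (Profit-maximizing Recurring Auction, first-order conditions): if a strictly
interior decreasing threshold vector `v*` is a local maximizer of `R` among threshold
vectors, and `f(v_t*) > 0`, `F(v_t*) > 0` for all `1 ≤ t ≤ T`, then for `1 ≤ t < T`:
`( (F(v_{t−1}*)/F(v_t*))^(N−1) − δ·(N·F(v_t*) − (N−1)·F(v_{t+1}*))/F(v_t*) )·K
  − (1−δ)·(v_t* − (1 − F(v_t*))/f(v_t*) − v_s) = 0`, and
`(F(v_{T−1}*)/F(v_T*))^(N−1)·K − (v_T* − (1 − F(v_T*))/f(v_T*) − v_s) = 0`. -/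
theorem profit_maximizing_recurring_auction_FOC
    (vlo vhi : ℝ) (hlohi : vlo < vhi)
    (N T : ℕ) (hN : 2 ≤ N) (hT : 1 ≤ T)
    (K : ℝ) (hK : 0 < K)
    (vs : ℝ)
    (δ : ℝ) (hδ0 : 0 < δ) (hδ1 : δ < 1)
    (F f : ℝ → ℝ)
    (hFderiv : ∀ x ∈ Set.Icc vlo vhi, HasDerivAt F (f x) x)
    (hfcont : ContinuousOn f (Set.Icc vlo vhi))
    (hFmono : MonotoneOn F (Set.Icc vlo vhi))
    (hFhi : F vhi = 1)
    (v : ℕ → ℝ)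
    (hv0 : v 0 = vhi)
    (hv1 : v 1 < vhi)
    (hvdec : ∀ t, 1 ≤ t → t < T → v (t + 1) < v t)
    (hvT : vlo < v T)
    (hfpos : ∀ t, 1 ≤ t → t ≤ T → 0 < f (v t))
    (hFpos : ∀ t, 1 ≤ t → t ≤ T → 0 < F (v t))
    (hmax : IsLocalMaxOn (Rev N T K vs δ F f)
      {u : ℕ → ℝ | u 0 = vhi ∧ (∀ t, 1 ≤ t → t ≤ T → u t ≤ u (t - 1)) ∧ vlo ≤ u T} v) :
    (∀ t, 1 ≤ t → t < T →
      ((F (v (t - 1)) / F (v t)) ^ (N - 1)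
          - δ * ((N : ℝ) * F (v t) - ((N : ℝ) - 1) * F (v (t + 1))) / F (v t)) * K
        - (1 - δ) * (v t - (1 - F (v t)) / f (v t) - vs) = 0) ∧
    (F (v (T - 1)) / F (v T)) ^ (N - 1) * K - (v T - (1 - F (v T)) / f (v T) - vs) = 0 :=
  profit_maximizing_recurring_auction_FOC_general vlo vhi N T hN hT K vs δ hδ0 F f hFderiv hfcont v
    hv0 hv1 hvdec hvT hfpos hFpos hmax
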